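/- arXiv:1009.4149 — 5 statements merged into one kernel-verified Lean document; each statement's English description precedes it below -/
import Mathlib

section
/- Let G = G(c) be a Gc-group with generators α, β, and let J = ⟨β^{α^i} : i ∈ ℤ⟩. Then G is the internal semidirect product J ⋊ ⟨α⟩ (i.e., J is normal in G, J ∩ ⟨α⟩ = 1, and J·⟨α⟩ = G), and J is isomorphic to the abelian group presented (as an abelian group) by generators β_i (i ∈ ℤ) subject to the relations Σ_{i=0}^{s} c_i β_{k+i} = 0 for all k ∈ ℤ. -/
open scoped commutatorElement in
/-- The defining relators of the Gc-group `G(c)`: with `α` the image of `0 : Fin 2` and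
`β` the image of `1 : Fin 2`, the relators are `⁅β, β^(α^i)⁆` for all `i : ℤ` together with
`β^(c 0) * (β^α)^(c 1) * ⋯ * (β^(α^s))^(c s)`, where `x^y = y⁻¹ * x * y`. -/
def gcRels (s : ℕ) (c : Fin (s + 1) → ℤ) : Set (FreeGroup (Fin 2)) :=
  (Set.range fun i : ℤ =>
    ⁅FreeGroup.of (1 : Fin 2),
      (FreeGroup.of (0 : Fin 2)) ^ (-i) * FreeGroup.of (1 : Fin 2) * (FreeGroup.of (0 : Fin 2)) ^ i⁆) ∪
  {((List.finRange (s + 1)).map fun i : Fin (s + 1) =>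
      ((FreeGroup.of (0 : Fin 2)) ^ (-(i : ℤ)) * FreeGroup.of (1 : Fin 2) *
        (FreeGroup.of (0 : Fin 2)) ^ (i : ℤ)) ^ (c i)).prod}

/-- The Gc-group `G(c)`, given by the presentation `⟨α, β ∣ ℛ_c⟩`. -/
abbrev GcGroup (s : ℕ) (c : Fin (s + 1) → ℤ) : Type := PresentedGroup (gcRels s c)

/-- The conditions on the vector `c = (c 0, …, c s)` in the definition of a Gc-group:
`s ≥ 1`, `c 0 ≠ 0`, `c s ≠ 0` and `gcd (c 0, …, c s) = 1`. -/
def IsGcVec (s : ℕ) (c : Fin (s + 1) → ℤ) : Prop :=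
  1 ≤ s ∧ c 0 ≠ 0 ∧ c (Fin.last s) ≠ 0 ∧ Finset.gcd Finset.univ c = 1

/-!
Let `A` be the quotient of `ℤ →₀ ℤ` by the shifted relation vectors `∑ cᵢ e_{k+i}`, with `ℤ`
acting on it by shifting indices. Sending `α ↦ (0, 1)` and `β ↦ (e₀, 0)` defines a map from
`G(c)` onto the model `A ⋊ ℤ`. Inside `G(c)`, conjugating the relators by powers of `α` shows
that the conjugates `βᵢ = β^(α^i)` commute pairwise and satisfy the shifted relations, so
`eₖ ↦ βₖ` defines `A → J`; its inverse is the model map restricted to `J`, whose image lies in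
the factor `A`. Conjugation by `α` shifts the `βᵢ`, so `J` is normal, and `J` meets `⟨α⟩`
trivially because the model map kills `J` in the `ℤ`-factor but sends `α^n` to `n`.
-/

theorem map_prod_univ_fin {M N : Type*} [CommMonoid M] [Monoid N] {n : ℕ} (f : M →* N)
    (x : Fin n → M) : f (∏ i, x i) = ((List.finRange n).map fun i => f (x i)).prod := by
  rw [Fin.prod_univ_def, map_list_prod, List.map_map]
  rfl

open Multiplicative SemidirectProduct

namespace GcGroup

variable {s : ℕ} {c : Fin (s + 1) → ℤ}

open scoped commutatorElement in
theorem map_gcRels_eq_one_iff {H : Type*} [Group H] (F : FreeGroup (Fin 2) →* H) :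
    (∀ r ∈ gcRels s c, F r = 1) ↔
      (∀ i : ℤ, Commute (F (.of 1)) (F (.of 0) ^ (-i) * F (.of 1) * F (.of 0) ^ i)) ∧
      ((List.finRange (s + 1)).map fun i : Fin (s + 1) =>
        (F (.of 0) ^ (-(i : ℤ)) * F (.of 1) * F (.of 0) ^ (i : ℤ)) ^ c i).prod = 1 := by
  simp only [gcRels, Set.mem_union, or_imp, forall_and, Set.mem_range, forall_exists_index,
    forall_apply_eq_imp_iff, Set.mem_singleton_iff, forall_eq, map_commutatorElement,
    commutatorElement_eq_one_iff_commute, map_list_prod, List.map_map, Function.comp_def, map_mul,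
    map_zpow]

variable (c) in
noncomputable def relVec (k : ℤ) : ℤ →₀ ℤ :=
  ∑ i : Fin (s + 1), c i • Finsupp.single (k + (i : ℤ)) 1

variable (c) in
noncomputable def relSubgroup : AddSubgroup (ℤ →₀ ℤ) :=
  AddSubgroup.closure (Set.range (relVec c))

variable (c) in
abbrev RelQuot : Type := (ℤ →₀ ℤ) ⧸ relSubgroup c

section Shift

variable {M : Type*} [AddCommMonoid M]

def shift (n : ℤ) : (ℤ →₀ M) ≃+ (ℤ →₀ M) := Finsupp.domCongr (Equiv.subRight n)

@[simp] theorem shift_single (n k : ℤ) (m : M) :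
    shift n (Finsupp.single k m) = Finsupp.single (k - n) m := by
  simp [shift]

theorem shift_zero_apply (x : ℤ →₀ M) : shift 0 x = x := by
  ext j
  simp [shift]

theorem shift_add_apply (m n : ℤ) (x : ℤ →₀ M) : shift (m + n) x = shift m (shift n x) := by
  ext j
  simp [shift, add_assoc]

end Shift

theorem shift_relVec (n k : ℤ) : shift n (relVec c k) = relVec c (k - n) := by
  simp only [relVec, map_sum, map_zsmul, shift_single, sub_add_eq_add_sub]

theorem map_shift_relSubgroup (n : ℤ) :
    (relSubgroup c).map (shift n : (ℤ →₀ ℤ) ≃+ (ℤ →₀ ℤ)).toAddMonoidHom = relSubgroup c := by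
  have : ⇑(shift n) ∘ relVec c = relVec c ∘ Equiv.subRight n := funext (shift_relVec n)
  rw [relSubgroup, AddMonoidHom.map_closure, ← Set.range_comp, AddEquiv.coe_toAddMonoidHom, this,
    (Equiv.subRight n).surjective.range_comp]

variable (c) in
noncomputable def shiftQuot (n : ℤ) : RelQuot c ≃+ RelQuot c :=
  QuotientAddGroup.congr _ _ (shift n) (map_shift_relSubgroup n)

variable (c) in
noncomputable def shiftAut : Multiplicative ℤ →* MulAut (Multiplicative (RelQuot c)) where
  toFun n := (shiftQuot c n.toAdd).toMultiplicative
  map_one' := by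
    ext x
    induction x using QuotientAddGroup.induction_on with
    | H x => exact congrArg QuotientAddGroup.mk (shift_zero_apply x)
  map_mul' m n := by
    ext x
    induction x using QuotientAddGroup.induction_on with
    | H x => exact congrArg QuotientAddGroup.mk (shift_add_apply _ _ x)

variable (c) in
abbrev Model : Type := Multiplicative (RelQuot c) ⋊[shiftAut c] Multiplicative ℤ

variable (c) in
noncomputable def quotGen (k : ℤ) : RelQuot c := (Finsupp.single k 1 : ℤ →₀ ℤ)

theorem shiftAut_quotGen (n k : ℤ) :
    shiftAut c (ofAdd n) (ofAdd (quotGen c k)) = ofAdd (quotGen c (k - n)) :=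
  congrArg (ofAdd ∘ QuotientAddGroup.mk) (shift_single n k 1)

theorem sum_zsmul_quotGen_eq_zero (k : ℤ) : ∑ i : Fin (s + 1), c i • quotGen c (k + i) = 0 := by
  simpa only [relVec, quotGen, QuotientAddGroup.mk_sum, QuotientAddGroup.mk_zsmul] using
    (QuotientAddGroup.eq_zero_iff (N := relSubgroup c) (relVec c k)).2
      (AddSubgroup.subset_closure (Set.mem_range_self k))

variable (c) in
noncomputable def modelGen : Fin 2 → Model c :=
  ![inr (ofAdd 1), inl (ofAdd (quotGen c 0))]

theorem modelGen_zero_zpow (n : ℤ) : modelGen c 0 ^ n = inr (ofAdd n) := by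
  simp [modelGen, ← map_zpow, ← ofAdd_zsmul]

theorem modelGen_conj (i : ℤ) :
    modelGen c 0 ^ (-i) * modelGen c 1 * modelGen c 0 ^ i = inl (ofAdd (quotGen c i)) := by
  rw [modelGen_zero_zpow, modelGen_zero_zpow, show ofAdd i = (ofAdd (-i))⁻¹ by simp,
    show modelGen c 1 = inl (ofAdd (quotGen c 0)) from rfl, ← inl_aut, shiftAut_quotGen, zero_sub,
    neg_neg]

theorem prod_modelGen_conj_zpow :
    ((List.finRange (s + 1)).map fun i : Fin (s + 1) =>
      (modelGen c 0 ^ (-(i : ℤ)) * modelGen c 1 * modelGen c 0 ^ (i : ℤ)) ^ c i).prod = 1 := by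
  simp only [modelGen_conj, ← map_zpow]
  rw [← map_prod_univ_fin inl (fun i : Fin (s + 1) => ofAdd (quotGen c i) ^ c i)]
  simpa only [← ofAdd_zsmul, ← ofAdd_sum, zero_add, ofAdd_zero, map_one, Function.comp_apply] using
    congrArg (inl ∘ ofAdd) (sum_zsmul_quotGen_eq_zero (c := c) 0)

theorem commute_modelGen_conj (i : ℤ) :
    Commute (modelGen c 1) (modelGen c 0 ^ (-i) * modelGen c 1 * modelGen c 0 ^ i) := by
  rw [modelGen_conj]
  exact (Commute.all _ _).map inl

variable (s c) in
noncomputable def toModel : GcGroup s c →* Model c :=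
  PresentedGroup.toGroup <| (map_gcRels_eq_one_iff (FreeGroup.lift (modelGen c))).2 <| by
    simpa only [FreeGroup.lift_apply_of] using ⟨commute_modelGen_conj, prod_modelGen_conj_zpow⟩

theorem toModel_of (j : Fin 2) : toModel s c (PresentedGroup.of j) = modelGen c j :=
  PresentedGroup.toGroup.of _

variable (s c) in
noncomputable def gen (i : ℤ) : GcGroup s c :=
  PresentedGroup.of 0 ^ (-i) * PresentedGroup.of 1 * PresentedGroup.of 0 ^ i

theorem gen_zero : gen s c 0 = PresentedGroup.of 1 := by
  simp [gen]

theorem toModel_gen (i : ℤ) : toModel s c (gen s c i) = inl (ofAdd (quotGen c i)) := by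
  simp only [gen, map_mul, map_zpow, toModel_of, modelGen_conj]

variable (s c) in
theorem gen_relations :
    (∀ i : ℤ, Commute (PresentedGroup.of 1) (gen s c i)) ∧
      ((List.finRange (s + 1)).map fun i : Fin (s + 1) => gen s c i ^ c i).prod = 1 :=
  (map_gcRels_eq_one_iff (PresentedGroup.mk (gcRels s c))).1 fun _ => PresentedGroup.one_of_mem

theorem conj_gen (t i : ℤ) :
    MulAut.conj (PresentedGroup.of 0 ^ (-t) : GcGroup s c) (gen s c i) = gen s c (i + t) := by
  simp only [MulAut.conj_apply, gen, neg_add, zpow_add]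
  group

theorem commute_gen (i j : ℤ) : Commute (gen s c i) (gen s c j) := by
  have := ((gen_relations s c).1 (j - i)).map (MulAut.conj (PresentedGroup.of 0 ^ (-i)))
  rwa [← gen_zero, conj_gen, conj_gen, zero_add, sub_add_cancel] at this

theorem prod_gen_zpow (k : ℤ) :
    ((List.finRange (s + 1)).map fun i : Fin (s + 1) => gen s c (k + i) ^ c i).prod = 1 := by
  let σ := MulAut.conj (PresentedGroup.of 0 ^ (-k) : GcGroup s c)
  have := congrArg σ (gen_relations s c).2
  simpa only [map_list_prod, List.map_map, Function.comp_def, map_zpow σ, σ, conj_gen, add_comm k,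
    map_one] using this

variable (s c) in
noncomputable def baseGroup : Subgroup (GcGroup s c) := Subgroup.closure (Set.range (gen s c))

theorem gen_mem_baseGroup (i : ℤ) : gen s c i ∈ baseGroup s c :=
  Subgroup.subset_closure ⟨i, rfl⟩

theorem of_one_mem_baseGroup : PresentedGroup.of 1 ∈ baseGroup s c :=
  gen_zero (s := s) (c := c) ▸ gen_mem_baseGroup 0

theorem baseGroup_normal : (baseGroup s c).Normal := by
  rw [← Subgroup.normalizer_eq_top_iff, eq_top_iff, ← PresentedGroup.closure_range_of,
    Subgroup.closure_le]
  refine Set.range_subset_iff.2 (Fin.forall_fin_two.2 ⟨?_, ?_⟩)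
  · refine Subgroup.le_normalizer_closure_iff.2 ?_ (Subgroup.mem_zpowers _)
    rintro _ ⟨t, rfl⟩ _ ⟨i, rfl⟩
    have := conj_gen (s := s) (c := c) (-t) i
    rw [MulAut.conj_apply, neg_neg] at this
    simp only [this]
    exact gen_mem_baseGroup _
  · exact Subgroup.le_normalizer of_one_mem_baseGroup

theorem right_toModel_of_mem {x : GcGroup s c} (hx : x ∈ baseGroup s c) :
    (toModel s c x).right = 1 := by
  suffices baseGroup s c ≤ (rightHom.comp (toModel s c)).ker from this hx
  rw [baseGroup, Subgroup.closure_le]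
  rintro _ ⟨i, rfl⟩
  simp [toModel_gen]

theorem right_toModel_zpow (n : ℤ) : (toModel s c (PresentedGroup.of 0 ^ n)).right = ofAdd n := by
  rw [map_zpow, toModel_of, modelGen_zero_zpow, right_inr]

theorem baseGroup_inf_zpowers : baseGroup s c ⊓ Subgroup.zpowers (PresentedGroup.of 0) = ⊥ := by
  refine eq_bot_iff.2 ?_
  rintro _ ⟨hJ, n, rfl⟩
  obtain rfl : n = 0 :=
    ofAdd_eq_one.1 ((right_toModel_zpow n).symm.trans (right_toModel_of_mem hJ))
  exact zpow_zero _

theorem baseGroup_sup_zpowers : baseGroup s c ⊔ Subgroup.zpowers (PresentedGroup.of 0) = ⊤ := by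
  rw [eq_top_iff, ← PresentedGroup.closure_range_of, Subgroup.closure_le]
  refine Set.range_subset_iff.2 (Fin.forall_fin_two.2 ⟨?_, ?_⟩)
  · exact Subgroup.mem_sup_right (Subgroup.mem_zpowers _)
  · exact Subgroup.mem_sup_left of_one_mem_baseGroup

instance baseGroup_isMulCommutative : IsMulCommutative (baseGroup s c) :=
  Subgroup.isMulCommutative_closure <| by
    rintro _ ⟨i, rfl⟩ _ ⟨j, rfl⟩
    exact commute_gen i j

open scoped IsMulCommutative

variable (s c) in
noncomputable def baseGen (k : ℤ) : baseGroup s c := ⟨gen s c k, gen_mem_baseGroup k⟩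

theorem closure_range_baseGen : Subgroup.closure (Set.range (baseGen s c)) = ⊤ := by
  have : Set.range (baseGen s c) = ((↑) : baseGroup s c → _) ⁻¹' Set.range (gen s c) := by
    ext x
    exact ⟨fun ⟨k, hk⟩ => ⟨k, hk ▸ rfl⟩, fun ⟨k, hk⟩ => ⟨k, Subtype.ext hk⟩⟩
  rw [this]
  exact Subgroup.closure_closure_coe_preimage

theorem prod_baseGen_zpow (k : ℤ) : ∏ i : Fin (s + 1), baseGen s c (k + i) ^ c i = 1 := by
  apply (baseGroup s c).subtype_injective
  refine (map_prod_univ_fin (baseGroup s c).subtype _).trans ?_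
  simpa [baseGen] using prod_gen_zpow k

variable (s c) in
noncomputable def ofRelQuot : RelQuot c →+ Additive (baseGroup s c) :=
  QuotientAddGroup.lift _
    (Finsupp.liftAddHom fun k => zmultiplesHom _ (Additive.ofMul (baseGen s c k))) <| by
    rw [relSubgroup, AddSubgroup.closure_le]
    rintro _ ⟨k, rfl⟩
    simpa [relVec, ← ofMul_zpow, ← ofMul_prod] using congrArg Additive.ofMul (prod_baseGen_zpow k)

theorem ofRelQuot_quotGen (k : ℤ) :
    ofRelQuot s c (quotGen c k) = Additive.ofMul (baseGen s c k) := by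
  simp [ofRelQuot, quotGen]

variable (s c) in
noncomputable def toRelQuot : baseGroup s c →* Multiplicative (RelQuot c) where
  toFun x := (toModel s c x).left
  map_one' := by simp
  map_mul' x y := by
    rw [Subgroup.coe_mul, map_mul, mul_left, right_toModel_of_mem x.2, map_one, MulAut.one_apply]

theorem toRelQuot_baseGen (k : ℤ) : toRelQuot s c (baseGen s c k) = ofAdd (quotGen c k) := by
  simp [toRelQuot, baseGen, toModel_gen]

variable (s c) in
noncomputable def baseGroupEquiv : baseGroup s c ≃* Multiplicative (RelQuot c) :=
  (toRelQuot s c).toMulEquiv (AddMonoidHom.toMultiplicativeLeft (ofRelQuot s c))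
    (by
      refine MonoidHom.eq_of_eqOn_dense closure_range_baseGen ?_
      rintro _ ⟨k, rfl⟩
      simp [toRelQuot_baseGen, ofRelQuot_quotGen])
    (by
      ext k
      change toAdd (toRelQuot s c (Additive.toMul (ofRelQuot s c (quotGen c k)))) = quotGen c k
      rw [ofRelQuot_quotGen, toMul_ofMul, toRelQuot_baseGen, toAdd_ofAdd])

end GcGroup

open scoped Pointwise in
theorem gcGroup_semidirect_general (s : ℕ) (c : Fin (s + 1) → ℤ)
    (α β : GcGroup s c) (hα : α = PresentedGroup.of 0) (hβ : β = PresentedGroup.of 1)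
    (J : Subgroup (GcGroup s c))
    (hJ : J = Subgroup.closure (Set.range fun i : ℤ => α ^ (-i) * β * α ^ i)) :
    J.Normal ∧
    J ⊓ Subgroup.zpowers α = ⊥ ∧
    (J : Set (GcGroup s c)) * (Subgroup.zpowers α : Set (GcGroup s c)) = Set.univ ∧
    Nonempty (J ≃* Multiplicative ((ℤ →₀ ℤ) ⧸
      AddSubgroup.closure (Set.range fun k : ℤ =>
        ∑ i : Fin (s + 1), c i • Finsupp.single (k + (i : ℤ)) (1 : ℤ)))) := by
  subst hα hβ
  obtain rfl : J = GcGroup.baseGroup s c := hJ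
  have hN := GcGroup.baseGroup_normal (s := s) (c := c)
  refine ⟨hN, GcGroup.baseGroup_inf_zpowers, ?_, ⟨GcGroup.baseGroupEquiv s c⟩⟩
  rw [← Subgroup.normal_mul, GcGroup.baseGroup_sup_zpowers, Subgroup.coe_top]

open scoped Pointwise in
/-- **Lemma.** Let `G = G(c)` be a Gc-group with generators `α, β`, and let
`J = ⟨β^(α^i) : i ∈ ℤ⟩`. Then `G` is the internal semidirect product `J ⋊ ⟨α⟩`
(`J` is normal, `J ∩ ⟨α⟩ = 1` and `J⬝⟨α⟩ = G`), and `J` is isomorphic to the abelian group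
presented, as an abelian group, by generators `β_i (i ∈ ℤ)` subject to the relations
`∑_{i=0}^{s} c_i β_{k+i} = 0` for all `k ∈ ℤ`. -/
theorem gcGroup_semidirect (s : ℕ) (c : Fin (s + 1) → ℤ) (hc : IsGcVec s c)
    (α β : GcGroup s c) (hα : α = PresentedGroup.of 0) (hβ : β = PresentedGroup.of 1)
    (J : Subgroup (GcGroup s c))
    (hJ : J = Subgroup.closure (Set.range fun i : ℤ => α ^ (-i) * β * α ^ i)) :
    J.Normal ∧
    J ⊓ Subgroup.zpowers α = ⊥ ∧
    (J : Set (GcGroup s c)) * (Subgroup.zpowers α : Set (GcGroup s c)) = Set.univ ∧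
    Nonempty (J ≃* Multiplicative ((ℤ →₀ ℤ) ⧸
      AddSubgroup.closure (Set.range fun k : ℤ =>
        ∑ i : Fin (s + 1), c i • Finsupp.single (k + (i : ℤ)) (1 : ℤ)))) :=
  gcGroup_semidirect_general s c α β hα hβ J hJ
end

section
/- Let s ≥ 1 and c = (c_0, c_1, …, c_s) ∈ ℤ^{s+1} with c_0 ≠ 0, c_s ≠ 0 and gcd(c_0,…,c_s) = 1, let m ≥ 1, and let M = M(c,m). Then the Smith normal form of M is (I_m ∣ 0_{m,s}), the m × (m+s) matrix consisting of the m × m identity matrix followed by s zero columns. Equivalently, all invariant factors of M equal 1, i.e., the linear map ℤ^{m+s} → ℤ^m given by M is surjective. -/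
open Finset in
lemma Mcm_modp_surj (s m : ℕ) (c : Fin (s + 1) → ℤ)
    (hgcd : Finset.gcd Finset.univ c = 1)
    (M : Matrix (Fin m) (Fin (m + s)) ℤ)
    (hM : ∀ (i : Fin m) (j : Fin (m + s)),
      M i j = if h : (i : ℕ) ≤ (j : ℕ) ∧ (j : ℕ) ≤ (i : ℕ) + s then
          c ⟨(j : ℕ) - (i : ℕ), by omega⟩ else 0)
    (p : ℕ) (hp : p.Prime) (y : Fin m → ℤ) :
    ∃ x z, M.mulVec x + (p : ℤ) • z = y := by
  haveI : Fact p.Prime := ⟨hp⟩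
  -- there is an index with c not divisible by p
  have hex : ∃ j : Fin (s + 1), ((c j : ZMod p) ≠ 0) := by
    by_contra h
    push_neg at h
    have hd : (p : ℤ) ∣ Finset.gcd Finset.univ c :=
      Finset.dvd_gcd fun j _ => (ZMod.intCast_zmod_eq_zero_iff_dvd _ _).mp (h j)
    rw [hgcd] at hd
    have h1 : (p : ℤ) ≤ 1 := Int.le_of_dvd one_pos hd
    have h2 := hp.two_le
    omega
  set T := Finset.univ.filter (fun j : Fin (s + 1) => (c j : ZMod p) ≠ 0) with hT
  have hTne : T.Nonempty := ⟨hex.choose, by simp [hT, hex.choose_spec]⟩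
  set k := T.max' hTne with hk
  have hknz : (c k : ZMod p) ≠ 0 := by
    have := T.max'_mem hTne
    simpa [hT] using this
  have hkmax : ∀ j : Fin (s + 1), (k : ℕ) < (j : ℕ) → (c j : ZMod p) = 0 := by
    intro j hj
    by_contra hcj
    have hle := T.le_max' j (by simp [hT, hcj])
    rw [← hk] at hle
    exact absurd hle (not_le.mpr hj)
  have hcol : ∀ i' : Fin m, (i' : ℕ) + (k : ℕ) < m + s := fun i' => by
    have h1 := i'.isLt; have h2 := k.isLt; omega
  set ι : Fin m → Fin (m + s) := fun i' => ⟨(i' : ℕ) + (k : ℕ), hcol i'⟩ with hι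
  set A : Matrix (Fin m) (Fin m) (ZMod p) := fun i i' => ((M i (ι i') : ℤ) : ZMod p) with hA
  have hdiag : ∀ i, A i i = (c k : ZMod p) := by
    intro i
    have hMv : M i (ι i) = c k := by
      rw [hM]
      rw [dif_pos ⟨by simp [hι], by simp only [hι]; have := k.isLt; omega⟩]
      congr 1
      apply Fin.ext
      simp [hι]
    simp [hA, hMv]
  have htri : A.BlockTriangular OrderDual.toDual := by
    intro i i' h
    have hlt : (i : ℕ) < (i' : ℕ) := h
    have hMv : ((M i (ι i') : ℤ) : ZMod p) = 0 := by
      rw [hM]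
      by_cases hcnd : (i : ℕ) ≤ ((ι i' : ℕ)) ∧ ((ι i' : ℕ)) ≤ (i : ℕ) + s
      · rw [dif_pos hcnd]
        apply hkmax
        simp only [hι]
        have : ((ι i' : ℕ)) = (i' : ℕ) + (k : ℕ) := rfl
        omega
      · rw [dif_neg hcnd]; simp
    simpa [hA] using hMv
  have hdet : A.det = (c k : ZMod p) ^ m := by
    rw [Matrix.det_of_lowerTriangular A htri]
    simp [hdiag]
  have hAunit : IsUnit A := by
    rw [Matrix.isUnit_iff_isUnit_det, hdet]
    exact (pow_ne_zero m hknz).isUnit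
  have hsurj : Function.Surjective A.mulVec := Matrix.mulVec_surjective_iff_isUnit.mpr hAunit
  obtain ⟨z', hz'⟩ := hsurj (fun i => ((y i : ZMod p)))
  set xb : Fin (m + s) → ZMod p := fun j => ∑ i' : Fin m, if j = ι i' then z' i' else 0 with hxb
  set x : Fin (m + s) → ℤ := fun j => (ZMod.cast (xb j) : ℤ) with hx
  have hxcast : ∀ j, ((x j : ℤ) : ZMod p) = xb j := fun j => ZMod.intCast_zmod_cast _
  have hmain : ∀ i, (((M.mulVec x) i : ℤ) : ZMod p) = ((y i : ℤ) : ZMod p) := by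
    intro i
    have : (((M.mulVec x) i : ℤ) : ZMod p) = ∑ j : Fin (m + s), ((M i j : ℤ) : ZMod p) * xb j := by
      simp only [Matrix.mulVec, dotProduct]
      push_cast
      refine Finset.sum_congr rfl fun j _ => ?_
      rw [hxcast]
    rw [this]
    have hswap : ∑ j : Fin (m + s), ((M i j : ℤ) : ZMod p) * xb j
        = ∑ i' : Fin m, ((M i (ι i') : ℤ) : ZMod p) * z' i' := by
      simp only [hxb, Finset.mul_sum, mul_ite, mul_zero]
      rw [Finset.sum_comm]
      refine Finset.sum_congr rfl fun i' _ => ?_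
      rw [Finset.sum_ite_eq' Finset.univ (ι i') (fun j => ((M i j : ℤ) : ZMod p) * z' i')]
      simp
    rw [hswap]
    have := congrFun hz' i
    simpa [Matrix.mulVec, dotProduct, hA] using this
  have hdvd : ∀ i, ∃ w : ℤ, y i - (M.mulVec x) i = (p : ℤ) * w := by
    intro i
    have : (((y i - (M.mulVec x) i : ℤ)) : ZMod p) = 0 := by
      push_cast
      rw [hmain i]
      ring
    exact (ZMod.intCast_zmod_eq_zero_iff_dvd _ _).mp this
  choose z hz using hdvd
  refine ⟨x, z, funext fun i => ?_⟩
  have := hz i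
  simp only [Pi.add_apply, Pi.smul_apply, smul_eq_mul]
  omega



/-- **Lemma (Smith normal form of `M(c,m)`).** Let `s ≥ 1` and `c = (c 0, …, c s) ∈ ℤ^(s+1)`
with `c 0 ≠ 0`, `c s ≠ 0` and `gcd (c 0, …, c s) = 1`, let `m ≥ 1`, and let `M = M(c,m)` be the
`m × (m+s)` matrix whose row `i` contains `c 0, …, c s` in columns `i, …, i+s` and zeros
elsewhere. Then the Smith normal form of `M` is `(I_m ∣ 0)`; equivalently, all invariant
factors of `M` equal `1`, i.e. the linear map `ℤ^(m+s) → ℤ^m` given by `M` is surjective. -/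
theorem smithNormalForm_Mcm (s : ℕ) (hs : 1 ≤ s) (c : Fin (s + 1) → ℤ)
    (hc0 : c 0 ≠ 0) (hcs : c (Fin.last s) ≠ 0) (hgcd : Finset.gcd Finset.univ c = 1)
    (m : ℕ) (hm : 1 ≤ m) (M : Matrix (Fin m) (Fin (m + s)) ℤ)
    (hM : ∀ (i : Fin m) (j : Fin (m + s)),
      M i j = if h : (i : ℕ) ≤ (j : ℕ) ∧ (j : ℕ) ≤ (i : ℕ) + s then
          c ⟨(j : ℕ) - (i : ℕ), by omega⟩ else 0) :
    Function.Surjective M.mulVecLin := by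
  rw [← LinearMap.range_eq_top]
  by_contra hne
  haveI : IsCoatomic (Submodule ℤ (Fin m → ℤ)) :=
    CompleteLattice.coatomic_of_top_compact
      ((Submodule.fg_iff_compact _).mp (Module.finite_def.mp inferInstance))
  obtain ⟨W, hW, hle⟩ :=
    (eq_top_or_exists_le_coatom (LinearMap.range M.mulVecLin)).resolve_left hne
  haveI : IsSimpleModule ℤ ((Fin m → ℤ) ⧸ W) := isSimpleModule_iff_isCoatom.mpr hW
  have hmax : (Module.annihilator ℤ ((Fin m → ℤ) ⧸ W)).IsMaximal :=
    IsSimpleModule.annihilator_isMaximal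
  set I := Module.annihilator ℤ ((Fin m → ℤ) ⧸ W) with hI
  -- I is generated by a prime
  obtain ⟨g, hg⟩ : ∃ g : ℤ, I = Ideal.span {g} := ⟨_, (Ideal.span_singleton_generator I).symm⟩
  have hg0 : g ≠ 0 := by
    rintro rfl
    rw [show Ideal.span ({(0:ℤ)} : Set ℤ) = ⊥ from Ideal.span_singleton_eq_bot.mpr rfl] at hg
    have h2ne : Ideal.span {(2 : ℤ)} ≠ ⊤ := by
      intro h
      rw [Ideal.span_singleton_eq_top, Int.isUnit_iff] at h
      omega
    have := hmax.eq_of_le h2ne (hg ▸ bot_le)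
    have h2 : (2 : ℤ) ∈ I := this ▸ Ideal.subset_span rfl
    rw [hg] at h2
    simp at h2
  have hgprime : Prime g := (Ideal.span_singleton_prime hg0).mp (hg ▸ hmax.isPrime)
  have hp : g.natAbs.Prime := Int.prime_iff_natAbs_prime.mp hgprime
  have hpI : ((g.natAbs : ℤ)) ∈ I := by
    rw [hg, Ideal.mem_span_singleton]
    exact Int.dvd_natAbs.mpr dvd_rfl
  have hann : ∀ q : (Fin m → ℤ) ⧸ W, ((g.natAbs : ℤ)) • q = 0 :=
    Module.mem_annihilator.mp hpI
  have hWtop : W = ⊤ := by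
    rw [Submodule.eq_top_iff']
    intro y
    obtain ⟨x, z, hxz⟩ := Mcm_modp_surj s m c hgcd M hM g.natAbs hp y
    rw [← Submodule.Quotient.mk_eq_zero W]
    have hy : y = M.mulVec x + (g.natAbs : ℤ) • z := hxz.symm
    rw [hy]
    have h1 : Submodule.Quotient.mk (p := W) (M.mulVec x) = 0 := by
      rw [Submodule.Quotient.mk_eq_zero]
      exact hle ⟨x, rfl⟩
    have h2 : Submodule.Quotient.mk (p := W) ((g.natAbs : ℤ) • z) = 0 := by
      rw [Submodule.Quotient.mk_smul]
      exact hann _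
    rw [Submodule.Quotient.mk_add, h1, h2, add_zero]
  exact hW.1 hWtop
end

section
/- Let G be a countable torsion-free locally virtually abelian group, and suppose that G does not contain free abelian subgroups of arbitrarily high finite rank (i.e., there is a maximal k ∈ ℕ such that G has a subgroup isomorphic to ℤ^k). Then G has an abelian subgroup of finite index that is normal and characteristic in G. -/
/-- A group is *virtually abelian* if it has an abelian subgroup of finite index. -/
def VirtuallyAbelian (G : Type*) [Group G] : Prop :=
  ∃ A : Subgroup G, IsMulCommutative A ∧ A.FiniteIndex

/-- Torsion-free monoid, with the old Mathlib meaning (removed from Mathlib). -/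
def Monoid.IsTorsionFree (M : Type*) [Monoid M] : Prop :=
  ∀ g : M, g ≠ 1 → ¬IsOfFinOrder g

/-- A group is *locally virtually abelian* if every finitely generated subgroup is
virtually abelian. -/
def LocallyVirtuallyAbelian (G : Type*) [Group G] : Prop :=
  ∀ H : Subgroup G, Group.FG H → VirtuallyAbelian H

/-!
Fix a finitely generated `F ≤ G` and a normal abelian subgroup `N` of finite index in `F`, so
`N ≅ ℤ^j` with `j ≤ k`. If an abelian `B ≤ F` contains a copy of `ℤ^k`, then so does `B ⊓ N`,
which by maximality of `k` has finite index in `N`; it is therefore central of finite index in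
`⟨N, x⟩` for each `x ∈ B`, and Schur's theorem together with torsion-freeness makes `⟨N, x⟩`
abelian. So `B` centralises `N`, and the centraliser `C_F(N)` is itself abelian. Its index is
at most `3^(k²)`: `F ⧸ C_F(N)` is a torsion subgroup of `GL_j(ℤ)`, and by Minkowski's argument
reduction mod 3 is injective on it.

Hence any two abelian subgroups of `G` containing a copy of `ℤ^k` commute elementwise (both lie
in a common `C_F(N)`), so together they generate an abelian subgroup `A`. The family is
invariant under automorphisms, so `A` is characteristic, and `A` meets every finitely generated
subgroup containing a fixed copy of `ℤ^k` with index at most `3^(k²)`, so `A` has finite index.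
-/

open Subgroup
open scoped IsMulCommutative MatrixGroups commutatorElement

namespace Matrix

variable {ι : Type*} [Fintype ι] {X Y : Matrix ι ι ℤ} {d e : ℤ}

lemma dvd_mul_apply (hX : ∀ i j, d ∣ X i j) (hY : ∀ i j, e ∣ Y i j) (i j : ι) :
    d * e ∣ (X * Y) i j :=
  Finset.dvd_sum fun l _ ↦ mul_dvd_mul (hX i l) (hY l j)

variable [DecidableEq ι]

lemma sq_dvd_one_add_pow_sub_apply (hX : ∀ i j, d ∣ X i j) (n : ℕ) (i j : ι) :
    d ^ 2 ∣ ((1 + X) ^ n - 1 - n • X) i j := by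
  induction n generalizing i j with
  | zero => simp
  | succ n ih =>
    have h : (1 + X) ^ (n + 1) - 1 - (n + 1) • X =
        ((1 + X) ^ n - 1 - n • X) * (1 + X) + n • (X * X) := by
      rw [pow_succ]
      simp only [sub_mul, mul_add, mul_one, one_mul, smul_mul_assoc, add_smul, one_smul]
      abel
    rw [h, add_apply]
    refine dvd_add ?_ ?_
    · simpa only [mul_one] using dvd_mul_apply ih (Y := 1 + X) (fun _ _ ↦ one_dvd _) i j
    · rw [smul_apply, nsmul_eq_mul]
      exact (sq d ▸ dvd_mul_apply hX hX i j).mul_left _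

lemma three_pow_succ_dvd_of_one_add_pow_eq_one {p : ℕ} (hp : p.Prime) (hX1 : (1 + X) ^ p = 1)
    {a : ℕ} (ha : 1 ≤ a) (hX : ∀ i j, 3 ^ a ∣ X i j) (i j : ι) : 3 ^ (a + 1) ∣ X i j := by
  by_cases hp3 : p = 3
  · -- `3 ^ (2 * a) ∣ 3 * X` alone is too weak when `a = 1`, so expand the cube exactly
    subst hp3
    have hcube : (3 : ℤ) • X + ((3 : ℤ) • (X * X) + X * X * X) = 0 := by
      have h : (1 + X) ^ 3 = 1 + ((3 : ℤ) • X + ((3 : ℤ) • (X * X) + X * X * X)) := by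
        noncomm_ring
      rwa [hX1, left_eq_add] at h
    have h3X : 3 ^ (a + 2) ∣ 3 * X i j := by
      have h := congrFun (congrFun hcube i) j
      simp only [add_apply, smul_apply, smul_eq_mul, zero_apply] at h
      rw [eq_neg_of_add_eq_zero_left h, dvd_neg]
      refine dvd_add (dvd_trans ?_ (mul_dvd_mul_left 3 (dvd_mul_apply hX hX i j)))
        (dvd_trans ?_ (dvd_mul_apply (dvd_mul_apply hX hX) hX i j))
      · rw [← pow_add, ← pow_succ']; exact pow_dvd_pow 3 (by omega)
      · rw [← pow_add, ← pow_add]; exact pow_dvd_pow 3 (by omega)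
    rw [pow_succ' 3 (a + 1)] at h3X
    exact (mul_dvd_mul_iff_left (by norm_num)).mp h3X
  · have hpX : 3 ^ (2 * a) ∣ p * X i j := by
      have h := sq_dvd_one_add_pow_sub_apply hX p i j
      rwa [hX1, sub_sub, sub_add_cancel_left, neg_apply, smul_apply, nsmul_eq_mul, dvd_neg,
        ← pow_mul, mul_comm] at h
    have hcop : IsCoprime ((3 : ℤ) ^ (2 * a)) p := IsCoprime.pow_left <| by
      exact_mod_cast Nat.isCoprime_iff_coprime.mpr
        ((Nat.coprime_primes Nat.prime_three hp).mpr (Ne.symm hp3))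
    exact dvd_trans (pow_dvd_pow 3 (by omega)) (hcop.dvd_of_dvd_mul_left hpX)

lemma three_dvd_sub_one_apply {A : Matrix ι ι ℤ}
    (hA : (Int.castRingHom (ZMod 3)).mapMatrix A = 1) (i j : ι) : 3 ∣ (A - 1) i j := by
  refine (ZMod.intCast_zmod_eq_zero_iff_dvd _ 3).mp ?_
  have h := congrFun (congrFun hA i) j
  rw [RingHom.mapMatrix_apply, map_apply, eq_intCast, one_apply] at h
  rw [sub_apply, Int.cast_sub, sub_eq_zero, h, one_apply]
  split_ifs <;> simp

lemma eq_one_of_pow_prime_eq_one {p : ℕ} (hp : p.Prime) {A : Matrix ι ι ℤ} (hAp : A ^ p = 1)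
    (hA : (Int.castRingHom (ZMod 3)).mapMatrix A = 1) : A = 1 := by
  have hdvd : ∀ a, ∀ i j, 3 ^ (a + 1) ∣ (A - 1) i j := by
    intro a
    induction a with
    | zero => simpa using three_dvd_sub_one_apply hA
    | succ a ih =>
      exact three_pow_succ_dvd_of_one_add_pow_eq_one hp (by rwa [add_sub_cancel]) (by omega) ih
  rw [← sub_eq_zero]
  ext i j
  by_contra h
  obtain ⟨a, ha⟩ := Int.finiteMultiplicity_iff.mpr ⟨(by norm_num : Int.natAbs 3 ≠ 1), h⟩
  exact ha (hdvd a i j)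

lemma eq_one_of_pow_eq_one {n : ℕ} (hn : n ≠ 0) {A : Matrix ι ι ℤ} (hAn : A ^ n = 1)
    (hA : (Int.castRingHom (ZMod 3)).mapMatrix A = 1) : A = 1 := by
  induction n using Nat.strong_induction_on with
  | _ n ih =>
    rcases eq_or_ne n 1 with rfl | hn1
    · simpa using hAn
    have hp := Nat.minFac_prime hn1
    obtain ⟨m, hm⟩ := Nat.minFac_dvd n
    have hm0 : m ≠ 0 := by rintro rfl; exact hn (by simpa using hm)
    refine ih m (hm ▸ lt_mul_left (Nat.pos_of_ne_zero hm0) hp.one_lt) hm0 ?_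
    refine eq_one_of_pow_prime_eq_one hp ?_ (by rw [map_pow, hA, one_pow])
    rw [← pow_mul, mul_comm, ← hm, hAn]

lemma GeneralLinearGroup.eq_one_of_isOfFinOrder_of_map_eq_one {u : GL ι ℤ}
    (hu : IsOfFinOrder u) (h : GeneralLinearGroup.map (Int.castRingHom (ZMod 3)) u = 1) : u = 1 :=
  Units.ext <| eq_one_of_pow_eq_one hu.orderOf_pos.ne'
    (by rw [← Units.val_pow_eq_pow_val, pow_orderOf_eq_one, Units.val_one])
    (congrArg Units.val h)

lemma GeneralLinearGroup.card_le_of_forall_isOfFinOrder (Q : Subgroup (GL ι ℤ))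
    (hQ : ∀ u ∈ Q, IsOfFinOrder u) :
    Finite Q ∧ Nat.card Q ≤ 3 ^ (Fintype.card ι * Fintype.card ι) := by
  set χ := (GeneralLinearGroup.map (Int.castRingHom (ZMod 3))).comp Q.subtype
  have hχ : Function.Injective χ := by
    refine (injective_iff_map_eq_one χ).mpr fun u hu ↦ Subtype.ext ?_
    exact eq_one_of_isOfFinOrder_of_map_eq_one (hQ u u.2) hu
  refine ⟨Finite.of_injective χ hχ, (Nat.card_le_card_of_injective χ hχ).trans ?_⟩
  calc Nat.card (GL ι (ZMod 3)) ≤ Nat.card (Matrix ι ι (ZMod 3)) :=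
        Nat.card_le_card_of_injective _ Units.val_injective
    _ = 3 ^ (Fintype.card ι * Fintype.card ι) := by
        simp [Matrix, Nat.card_eq_fintype_card, pow_mul]

end Matrix

def MulAut.multiplicativeEquivIntLinearEquiv (M : Type*) [AddCommGroup M] :
    MulAut (Multiplicative M) ≃* (M ≃ₗ[ℤ] M) where
  toFun φ := (AddEquiv.toMultiplicative.symm φ).toIntLinearEquiv
  invFun f := AddEquiv.toMultiplicative f.toAddEquiv
  left_inv _ := rfl
  right_inv _ := rfl
  map_mul' _ _ := rfl

def MulAut.equivGL (j : ℕ) : MulAut (Multiplicative (Fin j → ℤ)) ≃* GL (Fin j) ℤ :=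
  (MulAut.multiplicativeEquivIntLinearEquiv _).trans
    (Matrix.GeneralLinearGroup.toLin.trans
      (LinearMap.GeneralLinearGroup.generalLinearEquiv ℤ _)).symm

variable {F : Type*} [Group F]

lemma MulAut.ker_conjNormal (N : Subgroup F) [N.Normal] :
    (MulAut.conjNormal : F →* MulAut N).ker = centralizer (N : Set F) := by
  ext g
  simp only [MonoidHom.mem_ker, mem_centralizer_iff, MulEquiv.ext_iff, MulAut.one_apply,
    Subtype.ext_iff, MulAut.conjNormal_apply, Subtype.forall]
  refine forall₂_congr fun h _ ↦ ?_
  rw [mul_inv_eq_iff_eq_mul, eq_comm]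

lemma isMulCommutative_of_le {H K : Subgroup F} [IsMulCommutative K] (h : H ≤ K) :
    IsMulCommutative H :=
  .of_setLike_mul_comm fun _ ha _ hb ↦ setLike_mul_comm (h ha) (h hb)

lemma MulEquiv.isMulCommutative {G H : Type*} [Group G] [Group H] [IsMulCommutative H]
    (e : G ≃* H) : IsMulCommutative G :=
  ⟨⟨fun a b ↦ e.injective (by rw [map_mul, map_mul, mul_comm])⟩⟩

lemma index_centralizer_le {N : Subgroup F} [N.Normal] [N.FiniteIndex] {j : ℕ}
    (e : N ≃* Multiplicative (Fin j → ℤ)) :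
    (centralizer (N : Set F)).index ≠ 0 ∧ (centralizer (N : Set F)).index ≤ 3 ^ (j * j) := by
  have : IsMulCommutative N := e.isMulCommutative
  set ρ : F →* GL (Fin j) ℤ :=
    ((MulAut.congr e).trans (MulAut.equivGL j)).toMonoidHom.comp MulAut.conjNormal
  have hker : ρ.ker = centralizer (N : Set F) := by
    rw [← MulAut.ker_conjNormal]
    ext g
    simp only [ρ, MonoidHom.mem_ker, MonoidHom.comp_apply, MulEquiv.coe_toMonoidHom,
      MulEquiv.map_eq_one_iff]
  have htors : ∀ u ∈ ρ.range, IsOfFinOrder u := by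
    rintro _ ⟨g, rfl⟩
    refine isOfFinOrder_iff_pow_eq_one.mpr
      ⟨N.index, Nat.pos_of_ne_zero FiniteIndex.index_ne_zero, ?_⟩
    rw [← map_pow, ← MonoidHom.mem_ker, hker]
    exact le_centralizer_iff_isMulCommutative.mpr this (N.pow_index_mem g)
  obtain ⟨_, hcard⟩ := Matrix.GeneralLinearGroup.card_le_of_forall_isOfFinOrder _ htors
  rw [← hker, index_ker]
  exact ⟨Nat.card_pos.ne', by simpa using hcard⟩

lemma Monoid.IsTorsionFree.subgroup (h : Monoid.IsTorsionFree F) (H : Subgroup F) :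
    Monoid.IsTorsionFree H := fun g hg hfin ↦
  h g (fun h1 ↦ hg (Subtype.ext h1))
    ((Submonoid.isOfFinOrder_coe (H := H.toSubmonoid)).mpr hfin)

/-- The transfer `g ↦ g ^ [F : Z(F)]` is a homomorphism into the abelian centre, so it kills
commutators. -/
lemma Monoid.IsTorsionFree.isMulCommutative_of_finiteIndex_center
    (htf : Monoid.IsTorsionFree F) [(center F).FiniteIndex] : IsMulCommutative F := by
  refine ⟨⟨fun a b ↦ ?_⟩⟩
  by_contra hab
  refine htf ⁅a, b⁆ (fun h ↦ hab (commutatorElement_eq_one_iff_mul_comm.mp h))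
    (isOfFinOrder_iff_pow_eq_one.mpr
      ⟨(center F).index, Nat.pos_of_ne_zero FiniteIndex.index_ne_zero, ?_⟩)
  rw [← MonoidHom.transferCenterPow_apply, map_commutatorElement,
    commutatorElement_eq_one_iff_mul_comm.mpr (mul_comm _ _), OneMemClass.coe_one]

lemma Monoid.IsTorsionFree.isMulCommutative_of_le_centralizer (htf : Monoid.IsTorsionFree F)
    {Z K : Subgroup F} (hK : K ≤ centralizer Z) (hZ : Z.relIndex K ≠ 0) :
    IsMulCommutative K := by
  have hcenter : Z.subgroupOf K ≤ center K := fun z hz ↦ mem_center_iff.mpr fun g ↦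
    Subtype.ext (mem_centralizer_iff.mp (hK g.2) z hz).symm
  have : (center K).FiniteIndex :=
    ⟨fun h ↦ hZ (Nat.eq_zero_of_zero_dvd (h ▸ index_dvd_of_le hcenter))⟩
  exact (htf.subgroup K).isMulCommutative_of_finiteIndex_center

def FreeAbelianRankLE (F : Type*) [Group F] (k : ℕ) : Prop :=
  ∀ m : ℕ, (∃ H : Subgroup F, Nonempty (H ≃* Multiplicative (Fin m → ℤ))) → m ≤ k

def Subgroup.ContainsFreeAbelianOfRank (B : Subgroup F) (k : ℕ) : Prop :=
  ∃ H ≤ B, Nonempty (H ≃* Multiplicative (Fin k → ℤ))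

variable {k : ℕ}

lemma FreeAbelianRankLE.of_injective {G : Type*} [Group G] (hmax : FreeAbelianRankLE G k)
    (f : F →* G) (hf : Function.Injective f) : FreeAbelianRankLE F k :=
  fun m ⟨H, ⟨e⟩⟩ ↦ hmax m ⟨H.map f, ⟨(H.equivMapOfInjective f hf).symm.trans e⟩⟩

lemma exists_mulEquiv_succ_of_zpow_mem {H : Subgroup F} (e : H ≃* Multiplicative (Fin k → ℤ))
    {b : F} (hb : b ∈ centralizer (H : Set F)) (hbH : ∀ n : ℤ, b ^ n ∈ H → n = 0) :
    ∃ H' : Subgroup F, Nonempty (H' ≃* Multiplicative (Fin (k + 1) → ℤ)) := by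
  let Φ : Multiplicative ℤ × Multiplicative (Fin k → ℤ) →* F :=
    (zpowersHom F b).noncommCoprod (H.subtype.comp e.symm.toMonoidHom) fun n v ↦
      Commute.zpow_left (mem_centralizer_iff.mp hb _ (e.symm v).2).symm n.toAdd
  have hΦ : Function.Injective Φ := by
    refine (injective_iff_map_eq_one Φ).mpr fun ⟨n, v⟩ h ↦ ?_
    change b ^ n.toAdd * (e.symm v : F) = 1 at h
    have hn : n.toAdd = 0 :=
      hbH _ (by rw [eq_inv_of_mul_eq_one_left h]; exact inv_mem (e.symm v).2)
    rw [toAdd_eq_zero] at hn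
    subst hn
    simp only [toAdd_one, zpow_zero, one_mul, OneMemClass.coe_eq_one,
      MulEquiv.map_eq_one_iff] at h
    rw [h, Prod.mk_one_one]
  exact ⟨Φ.range, ⟨(MonoidHom.ofInjective hΦ).symm.trans <|
    (MulEquiv.prodMultiplicative ℤ (Fin k → ℤ)).symm.trans <|
      AddEquiv.toMultiplicative (Fin.consLinearEquiv ℤ fun _ ↦ ℤ).toAddEquiv⟩⟩

/-- A copy of `ℤ^k` of infinite index in an abelian group would extend to a copy of `ℤ^(k+1)`. -/
lemma FreeAbelianRankLE.relIndex_ne_zero (hmax : FreeAbelianRankLE F k) {N H : Subgroup F}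
    [IsMulCommutative N] [Group.FG N] (hHN : H ≤ N) (e : H ≃* Multiplicative (Fin k → ℤ)) :
    H.relIndex N ≠ 0 := by
  intro h0
  have : Infinite (N ⧸ H.subgroupOf N) := index_eq_zero_iff_infinite.mp h0
  obtain ⟨q, hq⟩ : ∃ q : N ⧸ H.subgroupOf N, ¬IsOfFinOrder q := by
    by_contra! h
    have := CommGroup.finite_of_fg_isMulTorsion _ h
    exact not_finite (N ⧸ H.subgroupOf N)
  obtain ⟨b, rfl⟩ := QuotientGroup.mk_surjective q
  have hbH : ∀ n : ℤ, (b : F) ^ n ∈ H → n = 0 := fun n hn ↦ by_contra fun hn0 ↦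
    hq (isOfFinOrder_iff_zpow_eq_one.mpr ⟨n, hn0, by
      rwa [← QuotientGroup.mk_zpow, QuotientGroup.eq_one_iff, mem_subgroupOf, coe_zpow]⟩)
  have hb : (b : F) ∈ centralizer (H : Set F) := mem_centralizer_iff.mpr fun h hh ↦
    setLike_mul_comm (hHN hh) b.2
  obtain ⟨H', ⟨e'⟩⟩ := exists_mulEquiv_succ_of_zpow_mem e hb hbH
  exact absurd (hmax _ ⟨H', ⟨e'⟩⟩) (by omega)

lemma Subgroup.ContainsFreeAbelianOfRank.inf_of_finiteIndex {B : Subgroup F}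
    (hB : B.ContainsFreeAbelianOfRank k) (N : Subgroup F) [N.Normal] [N.FiniteIndex] :
    (B ⊓ N).ContainsFreeAbelianOfRank k := by
  obtain ⟨H, hHB, ⟨e⟩⟩ := hB
  let ψ : Multiplicative (Fin k → ℤ) →* F :=
    H.subtype.comp (e.symm.toMonoidHom.comp (powMonoidHom N.index))
  have hψ : Function.Injective ψ := Subtype.val_injective.comp <|
    e.symm.injective.comp (pow_left_injective FiniteIndex.index_ne_zero)
  refine ⟨ψ.range, ?_, ⟨(MonoidHom.ofInjective hψ).symm⟩⟩
  rintro _ ⟨v, rfl⟩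
  refine ⟨hHB (e.symm _).2, ?_⟩
  simp only [ψ, MonoidHom.comp_apply, powMonoidHom_apply, MulEquiv.coe_toMonoidHom, map_pow,
    coe_subtype]
  exact N.pow_index_mem _

lemma exists_mulEquiv_of_fg_of_isTorsionFree {N : Type*} [CommGroup N] [Group.FG N]
    (htf : Monoid.IsTorsionFree N) : ∃ j : ℕ, Nonempty (N ≃* Multiplicative (Fin j → ℤ)) := by
  have : Module.Finite ℤ (Additive N) :=
    Module.Finite.iff_addGroup_fg.mpr (GroupFG.iff_add_fg.mp ‹_›)
  have : IsAddTorsionFree (Additive N) :=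
    IsAddTorsionFree.of_not_isOfFinAddOrder fun x hx hfin ↦
      htf x.toMul (by simpa using hx) (isOfFinAddOrder_ofMul_iff.mp hfin)
  have : Module.Free ℤ (Additive N) := Module.free_of_finite_type_torsion_free'
  exact ⟨_, ⟨AddEquiv.toMultiplicativeRight
    (Module.finBasis ℤ (Additive N)).equivFun.toAddEquiv⟩⟩

lemma le_centralizer_of_containsFreeAbelianOfRank (htf : Monoid.IsTorsionFree F)
    (hmax : FreeAbelianRankLE F k) {N : Subgroup F} [N.Normal] [N.FiniteIndex]
    [IsMulCommutative N] [Group.FG N] {B : Subgroup F} [IsMulCommutative B]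
    (hB : B.ContainsFreeAbelianOfRank k) : B ≤ centralizer (N : Set F) := by
  intro x hx
  obtain ⟨H, hH, ⟨e⟩⟩ := hB.inf_of_finiteIndex N
  have hBN : (B ⊓ N).relIndex N ≠ 0 :=
    mt (relIndex_eq_zero_of_le_left hH) (hmax.relIndex_ne_zero (hH.trans inf_le_right) e)
  set K := N ⊔ zpowers x
  have hK : IsMulCommutative K := by
    refine htf.isMulCommutative_of_le_centralizer (Z := B ⊓ N) (sup_le ?_ ?_) ?_
    · exact le_centralizer_iff.mp
        (inf_le_right.trans (le_centralizer_iff_isMulCommutative.mpr ‹_›))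
    · exact (zpowers_le (H := centralizer _)).mpr
        (mem_centralizer_iff.mpr fun h hh ↦ setLike_mul_comm hh.1 hx)
    · rw [← relIndex_mul_relIndex _ _ _ inf_le_right le_sup_left]
      exact mul_ne_zero hBN (FiniteIndex.index_ne_zero (H := N.subgroupOf K))
  exact mem_centralizer_iff.mpr fun g hg ↦
    setLike_mul_comm (s := K) (le_sup_left (a := N) hg) (le_sup_right (a := N) (mem_zpowers x))

lemma exists_isMulCommutative_index_le [Group.FG F] (htf : Monoid.IsTorsionFree F)
    (hva : VirtuallyAbelian F) (hmax : FreeAbelianRankLE F k) :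
    ∃ C : Subgroup F, IsMulCommutative C ∧ C.index ≠ 0 ∧ C.index ≤ 3 ^ (k * k) ∧
      ∀ B : Subgroup F, IsMulCommutative B → B.ContainsFreeAbelianOfRank k → B ≤ C := by
  obtain ⟨B₀, hB₀, hB₀fi⟩ := hva
  set N := B₀.normalCore
  have : IsMulCommutative N := isMulCommutative_of_le B₀.normalCore_le
  have : Group.FG N := fg_of_index_ne_zero N
  obtain ⟨j, ⟨e⟩⟩ := exists_mulEquiv_of_fg_of_isTorsionFree (htf.subgroup N)
  obtain ⟨hC, hCj⟩ := index_centralizer_le e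
  have hjk : j ≤ k := hmax j ⟨N, ⟨e⟩⟩
  refine ⟨centralizer N, htf.isMulCommutative_of_le_centralizer le_rfl ?_, hC,
    hCj.trans (Nat.pow_le_pow_right (by norm_num) (Nat.mul_le_mul hjk hjk)),
    fun B _ hB ↦ le_centralizer_of_containsFreeAbelianOfRank htf hmax hB⟩
  exact FiniteIndex.index_ne_zero (H := N.subgroupOf (centralizer N))

lemma Subgroup.fg_of_mulEquiv {H : Subgroup F} (e : H ≃* Multiplicative (Fin k → ℤ)) : H.FG :=
  (Group.fg_iff_subgroup_fg H).mp
    (Group.fg_of_surjective (f := e.symm.toMonoidHom) e.symm.surjective)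

section Global

variable {G : Type*} [Group G]

lemma exists_isMulCommutative_relIndex_le (htf : Monoid.IsTorsionFree G)
    (hlva : LocallyVirtuallyAbelian G) (hmax : FreeAbelianRankLE G k) {F : Subgroup G}
    (hF : F.FG) :
    ∃ C ≤ F, IsMulCommutative C ∧ C.relIndex F ≠ 0 ∧ C.relIndex F ≤ 3 ^ (k * k) ∧
      ∀ B ≤ F, IsMulCommutative B → B.ContainsFreeAbelianOfRank k → B ≤ C := by
  have : Group.FG F := (Group.fg_iff_subgroup_fg F).mpr hF
  obtain ⟨C, hC, hCi, hCk, hCB⟩ := exists_isMulCommutative_index_le (htf.subgroup F)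
    (hlva F this) (hmax.of_injective F.subtype F.subtype_injective)
  have hrel : (C.map F.subtype).relIndex F = C.index :=
    congrArg index (comap_map_eq_self_of_injective F.subtype_injective C)
  refine ⟨C.map F.subtype, map_subtype_le C, inferInstance, hrel ▸ hCi, hrel ▸ hCk,
    fun B hBF _ ⟨H, hHB, ⟨e⟩⟩ ↦ ?_⟩
  rw [← map_subgroupOf_eq_of_le hBF]
  exact map_mono (hCB _ inferInstance
    ⟨H.subgroupOf F, subgroupOf_mono F hHB, ⟨(subgroupOfEquivOfLe (hHB.trans hBF)).trans e⟩⟩)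

lemma mul_comm_of_containsFreeAbelianOfRank (htf : Monoid.IsTorsionFree G)
    (hlva : LocallyVirtuallyAbelian G) (hmax : FreeAbelianRankLE G k) {B₁ B₂ : Subgroup G}
    [IsMulCommutative B₁] [IsMulCommutative B₂] (h₁ : B₁.ContainsFreeAbelianOfRank k)
    (h₂ : B₂.ContainsFreeAbelianOfRank k) {x y : G} (hx : x ∈ B₁) (hy : y ∈ B₂) :
    x * y = y * x := by
  classical
  obtain ⟨H₁, hH₁, ⟨e₁⟩⟩ := h₁
  obtain ⟨H₂, hH₂, ⟨e₂⟩⟩ := h₂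
  set F := H₁ ⊔ H₂ ⊔ closure ↑({x, y} : Finset G)
  obtain ⟨C, -, hC, -, -, hCB⟩ := exists_isMulCommutative_relIndex_le htf hlva hmax
    (F := F) (((fg_of_mulEquiv e₁).sup (fg_of_mulEquiv e₂)).sup ⟨_, rfl⟩)
  have hxyF : x ∈ F ∧ y ∈ F := by
    constructor <;> exact le_sup_right (a := H₁ ⊔ H₂) (subset_closure (by simp))
  have h₁C : B₁ ⊓ F ≤ C := hCB _ inf_le_right (isMulCommutative_of_le inf_le_left)
    ⟨H₁, le_inf hH₁ (le_sup_left.trans le_sup_left), ⟨e₁⟩⟩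
  have h₂C : B₂ ⊓ F ≤ C := hCB _ inf_le_right (isMulCommutative_of_le inf_le_left)
    ⟨H₂, le_inf hH₂ (le_sup_right.trans le_sup_left), ⟨e₂⟩⟩
  exact setLike_mul_comm (h₁C ⟨hx, hxyF.1⟩) (h₂C ⟨hy, hxyF.2⟩)

lemma Subgroup.finiteIndex_of_forall_finset_relIndex_le (A : Subgroup G) (M : ℕ)
    (h : ∀ s : Finset G, ∃ F : Subgroup G, ↑s ⊆ (F : Set G) ∧ A.relIndex F ≠ 0 ∧
      A.relIndex F ≤ M) : A.FiniteIndex := by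
  suffices Finite (G ⧸ A) from finiteIndex_of_finite_quotient
  by_contra hinf
  have : Infinite (G ⧸ A) := not_finite_iff_infinite.mp hinf
  obtain ⟨t, ht⟩ := Infinite.exists_subset_card_eq (G ⧸ A) (M + 1)
  classical
  obtain ⟨F, hsF, hF0, hFM⟩ := h (t.image Quotient.out)
  have : (A.subgroupOf F).FiniteIndex := ⟨hF0⟩
  let f : t → F ⧸ A.subgroupOf F := fun q ↦
    (⟨q.1.out, hsF (Finset.mem_image_of_mem _ q.2)⟩ : F)
  have hf : Function.Injective f := by
    rintro ⟨q₁, h₁⟩ ⟨q₂, h₂⟩ h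
    rw [QuotientGroup.eq, mem_subgroupOf] at h
    rw [Subtype.mk.injEq, ← QuotientGroup.out_eq' q₁, ← QuotientGroup.out_eq' q₂]
    exact QuotientGroup.eq.mpr h
  have := Nat.card_le_card_of_injective f hf
  rw [Nat.card_eq_fintype_card, Fintype.card_coe, ht] at this
  exact (this.trans hFM).not_gt (Nat.lt_succ_self M)

def fullRankAbelianSpan (G : Type*) [Group G] (k : ℕ) : Subgroup G :=
  ⨆ (B : Subgroup G) (_ : IsMulCommutative B ∧ B.ContainsFreeAbelianOfRank k), B

lemma characteristic_fullRankAbelianSpan : (fullRankAbelianSpan G k).Characteristic := by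
  refine characteristic_iff_map_le.mpr fun φ ↦ ?_
  simp only [fullRankAbelianSpan, Subgroup.map_iSup]
  refine iSup₂_le fun B ⟨_, H, hHB, ⟨e⟩⟩ ↦ le_iSup₂_of_le (B.map φ.toMonoidHom)
    ⟨inferInstance, H.map φ.toMonoidHom, map_mono hHB, ⟨(φ.subgroupMap H).symm.trans e⟩⟩ le_rfl

lemma isMulCommutative_fullRankAbelianSpan (htf : Monoid.IsTorsionFree G)
    (hlva : LocallyVirtuallyAbelian G) (hmax : FreeAbelianRankLE G k) :
    IsMulCommutative (fullRankAbelianSpan G k) := by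
  refine le_centralizer_iff_isMulCommutative.mp <| iSup₂_le fun B₁ ⟨_, h₁⟩ ↦
    le_centralizer_iff.mp <| iSup₂_le fun B₂ ⟨_, h₂⟩ y hy ↦
      mem_centralizer_iff.mpr fun x hx ↦ ?_
  exact mul_comm_of_containsFreeAbelianOfRank htf hlva hmax h₁ h₂ hx hy

lemma finiteIndex_fullRankAbelianSpan (htf : Monoid.IsTorsionFree G)
    (hlva : LocallyVirtuallyAbelian G) (hmax : FreeAbelianRankLE G k)
    (hk : ∃ H : Subgroup G, Nonempty (H ≃* Multiplicative (Fin k → ℤ))) :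
    (fullRankAbelianSpan G k).FiniteIndex := by
  obtain ⟨H₀, ⟨e₀⟩⟩ := hk
  refine finiteIndex_of_forall_finset_relIndex_le _ (3 ^ (k * k)) fun s ↦ ?_
  obtain ⟨C, -, hC, hC0, hCM, hCB⟩ := exists_isMulCommutative_relIndex_le htf hlva hmax
    (F := H₀ ⊔ closure s) ((fg_of_mulEquiv e₀).sup ⟨s, rfl⟩)
  have hH₀C : H₀ ≤ C := hCB H₀ le_sup_left e₀.isMulCommutative ⟨H₀, le_rfl, ⟨e₀⟩⟩
  have hCA : C ≤ fullRankAbelianSpan G k := le_iSup₂_of_le C ⟨hC, H₀, hH₀C, ⟨e₀⟩⟩ le_rfl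
  exact ⟨_, fun x hx ↦ le_sup_right (a := H₀) (subset_closure hx),
    mt (relIndex_eq_zero_of_le_left hCA) hC0, (relIndex_le_of_le_left hCA hC0).trans hCM⟩

end Global

theorem countable_torsionFree_locallyVA_general (G : Type) [Group G]
    (htf : Monoid.IsTorsionFree G) (hlva : LocallyVirtuallyAbelian G)
    (k : ℕ)
    (hk : ∃ H : Subgroup G, Nonempty (H ≃* Multiplicative (Fin k → ℤ)))
    (hmax : ∀ m : ℕ, (∃ H : Subgroup G, Nonempty (H ≃* Multiplicative (Fin m → ℤ))) → m ≤ k) :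
    ∃ A : Subgroup G, IsMulCommutative A ∧ A.FiniteIndex ∧ A.Normal ∧ A.Characteristic :=
  have := characteristic_fullRankAbelianSpan (G := G) (k := k)
  ⟨fullRankAbelianSpan G k, isMulCommutative_fullRankAbelianSpan htf hlva hmax,
    finiteIndex_fullRankAbelianSpan htf hlva hmax hk, normal_of_characteristic _, this⟩

/-- **Proposition.** Let `G` be a countable torsion-free locally virtually abelian group, and
suppose that `G` does not contain free abelian subgroups of arbitrarily high finite rank, i.e.
there is a maximal `k ∈ ℕ` such that `G` has a subgroup isomorphic to `ℤ^k`. Then `G` has an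
abelian subgroup of finite index that is normal and characteristic in `G`. -/
theorem countable_torsionFree_locallyVA (G : Type) [Group G] [Countable G]
    (htf : Monoid.IsTorsionFree G) (hlva : LocallyVirtuallyAbelian G)
    (k : ℕ)
    (hk : ∃ H : Subgroup G, Nonempty (H ≃* Multiplicative (Fin k → ℤ)))
    (hmax : ∀ m : ℕ, (∃ H : Subgroup G, Nonempty (H ≃* Multiplicative (Fin m → ℤ))) → m ≤ k) :
    ∃ A : Subgroup G, IsMulCommutative A ∧ A.FiniteIndex ∧ A.Normal ∧ A.Characteristic :=
  countable_torsionFree_locallyVA_general G htf hlva k hk hmax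
end

section
/- Let G be a countable torsion-free locally virtually abelian group, and let N be an abelian normal subgroup of G such that G/N is isomorphic to ℤ^∞. Then G has a subgroup isomorphic to ℤ^∞. -/
/-- `ℤ^∞`, a free abelian group of countably infinite rank (written multiplicatively). -/
abbrev ZInf : Type := Multiplicative (ℕ →₀ ℤ)

/-!
Since `G/N` is abelian, `N` contains all commutators, so two elements of the centralizer `C` of `N`
have a commutator commuting with both of them. Local virtual abelianness gives them commuting
powers, and in a torsion-free group this forces them to commute: `C` is abelian.

If `N` has infinite `ℤ`-rank it already contains `ℤ^∞`. Otherwise a finite set `S ⊆ N` spans `N`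
up to roots. Some power `gⁿ` of any `g` commutes with `sⁿ` for all `s ∈ S`, and in the
torsion-free abelian normal subgroup `N` commuting with a power of `x` forces commuting with `x`;
hence `gⁿ ∈ C`. Suitable powers of lifts of the basis of `ℤ^∞ ≅ G/N` are then independent elements
of the abelian group `C`.
-/

open scoped IsMulCommutative commutatorElement

theorem VirtuallyAbelian.exists_pow_commute {G : Type*} [Group G] (h : VirtuallyAbelian G) :
    ∃ n, 0 < n ∧ ∀ x y : G, Commute (x ^ n) (y ^ n) := by
  obtain ⟨A, hA, hAfi⟩ := h
  refine ⟨A.normalCore.index, Nat.pos_of_ne_zero Subgroup.FiniteIndex.index_ne_zero,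
    fun x y => setLike_mul_comm (s := A) ?_ ?_⟩ <;>
  exact A.normalCore_le (A.normalCore.pow_index_mem _)

theorem LocallyVirtuallyAbelian.exists_pow_commute {G : Type*} [Group G]
    (h : LocallyVirtuallyAbelian G) {S : Set G} (hS : S.Finite) :
    ∃ n, 0 < n ∧ ∀ x ∈ S, ∀ y ∈ S, Commute (x ^ n) (y ^ n) := by
  have := hS.to_subtype
  obtain ⟨n, hn, hcomm⟩ := (h _ (Group.closure_finite_fg S)).exists_pow_commute
  refine ⟨n, hn, fun x hx y hy => ?_⟩
  simpa using (hcomm ⟨x, Subgroup.subset_closure hx⟩ ⟨y, Subgroup.subset_closure hy⟩).map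
    (Subgroup.closure S).subtype

section TorsionFree

variable {G : Type*} [Group G] (htf : ∀ g : G, g ≠ 1 → ¬IsOfFinOrder g)
include htf

theorem eq_of_commute_of_zpow_eq {x y : G} (hxy : Commute x y) {n : ℤ} (hn : n ≠ 0)
    (h : x ^ n = y ^ n) : x = y := by
  by_contra hne
  refine htf (x * y⁻¹) (mul_inv_eq_one.not.mpr hne) (isOfFinOrder_iff_zpow_eq_one.mpr ⟨n, hn, ?_⟩)
  rw [hxy.inv_right.mul_zpow, h, inv_zpow, mul_inv_cancel]

/-- Conjugation by `x` sends `y` to `⁅x, y⁆ * y`, so conjugation by `x ^ n` sends `y ^ n` to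
`⁅x, y⁆ ^ (n * n) * y ^ n`. -/
theorem commute_of_commute_pow {x y : G} (hx : Commute ⁅x, y⁆ x) (hy : Commute ⁅x, y⁆ y)
    {n : ℕ} (hn : n ≠ 0) (h : Commute (x ^ n) (y ^ n)) : Commute x y := by
  set z := ⁅x, y⁆ with hz_def
  have hconj : ∀ k : ℕ, x ^ k * y * (x ^ k)⁻¹ = z ^ k * y := by
    intro k
    induction k with
    | zero => simp
    | succ k ih =>
      calc x ^ (k + 1) * y * (x ^ (k + 1))⁻¹ = x * (x ^ k * y * (x ^ k)⁻¹) * x⁻¹ := by group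
        _ = z ^ k * (x * y * x⁻¹) := by rw [ih, ← mul_assoc, ← (hx.pow_left k).eq]; group
        _ = z ^ (k + 1) * y := by rw [pow_succ, hz_def, commutatorElement_def]; group
  have hpow : z ^ (n * n) * y ^ n = y ^ n := by
    rw [pow_mul, ← (hy.pow_left n).mul_pow, ← hconj, conj_pow, h.eq, mul_inv_cancel_right]
  have hz1 : z = 1 := by
    refine of_not_not fun hne => htf z hne (isOfFinOrder_iff_pow_eq_one.mpr ⟨n * n, ?_, ?_⟩)
    · positivity
    · simpa using hpow
  exact commutatorElement_eq_one_iff_commute.mp hz1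

theorem isMulCommutative_centralizer (hlva : LocallyVirtuallyAbelian G) {N : Subgroup G}
    (hN : commutator G ≤ N) : IsMulCommutative (Subgroup.centralizer (N : Set G)) := by
  refine ⟨⟨fun a b => Subtype.ext ?_⟩⟩
  have hab : ⁅(a : G), (b : G)⁆ ∈ N :=
    hN (commutator_def G ▸ Subgroup.commutator_mem_commutator trivial trivial)
  obtain ⟨n, hn, hcomm⟩ := hlva.exists_pow_commute (S := {(a : G), (b : G)}) (by simp)
  refine (commute_of_commute_pow htf ?_ ?_ hn.ne' (hcomm _ (by simp) _ (by simp))).eq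
  · exact Subgroup.mem_centralizer_iff.mp a.2 _ hab
  · exact Subgroup.mem_centralizer_iff.mp b.2 _ hab

theorem commute_of_commute_zpow_of_mem {N : Subgroup G} [N.Normal] [IsMulCommutative N] (h : G)
    {x : G} (hx : x ∈ N) {n : ℤ} (hn : n ≠ 0) (hxn : Commute h (x ^ n)) : Commute h x := by
  have hconj : h * x * h⁻¹ = x := by
    refine eq_of_commute_of_zpow_eq htf ?_ hn ?_
    · exact setLike_mul_comm (‹N.Normal›.conj_mem x hx h) hx
    · rw [conj_zpow, hxn.eq, mul_inv_cancel_right]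
  exact mul_inv_eq_iff_eq_mul.mp hconj

theorem exists_pow_mem_centralizer (hlva : LocallyVirtuallyAbelian G) {N : Subgroup G} [N.Normal]
    [IsMulCommutative N] {S : Set N} (hS : S.Finite)
    (hspan : ∀ x : N, ∃ m : ℤ, m ≠ 0 ∧ x ^ m ∈ Subgroup.closure S) (g : G) :
    ∃ n, 0 < n ∧ g ^ n ∈ Subgroup.centralizer (N : Set G) := by
  obtain ⟨n, hn, hcomm⟩ := hlva.exists_pow_commute ((hS.image Subtype.val).insert g)
  let K : Subgroup N := (Subgroup.centralizer {g ^ n}).comap N.subtype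
  have hK : ∀ x : N, x ∈ K ↔ Commute (g ^ n) x := fun x =>
    Subgroup.mem_centralizer_singleton_iff.trans eq_comm
  have hSK : Subgroup.closure S ≤ K := (Subgroup.closure_le K).mpr fun s hs => (hK s).mpr <|
    commute_of_commute_zpow_of_mem htf _ s.2 (Int.natCast_ne_zero.mpr hn.ne') <| by
      simpa using hcomm g (Set.mem_insert _ _) s (Set.mem_insert_of_mem _ ⟨s, hs, rfl⟩)
  refine ⟨n, hn, Subgroup.mem_centralizer_iff.mpr fun x hx => ?_⟩
  obtain ⟨m, hm, hxm⟩ := hspan ⟨x, hx⟩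
  exact (commute_of_commute_zpow_of_mem htf _ hx hm (by simpa using (hK _).mp (hSK hxm))).symm

end TorsionFree

theorem CommGroup.exists_linearIndependent_or_finite_zpow_mem_closure (A : Type*) [CommGroup A] :
    (∃ b : ℕ → Additive A, LinearIndependent ℤ b) ∨
      ∃ S : Set A, S.Finite ∧ ∀ x : A, ∃ m : ℤ, m ≠ 0 ∧ x ^ m ∈ Subgroup.closure S := by
  obtain ⟨I, hI, hmax⟩ := exists_maximal_linearIndepOn ℤ (id : Additive A → Additive A)
  rcases I.finite_or_infinite with hfin | hinf
  · right
    refine ⟨Additive.ofMul ⁻¹' I, hfin.preimage Additive.ofMul.injective.injOn, fun x => ?_⟩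
    have hspan : Submodule.span ℤ I ≤
        (Subgroup.closure (Additive.ofMul ⁻¹' I)).toAddSubgroup.toIntSubmodule :=
      Submodule.span_le.mpr fun a ha => Subgroup.subset_closure (a := a.toMul) ha
    by_cases hx : Additive.ofMul x ∈ I
    · exact ⟨1, one_ne_zero, by rw [zpow_one]; exact Subgroup.subset_closure hx⟩
    · obtain ⟨m, hm, hmx⟩ := hmax _ hx
      exact ⟨m, hm, hspan (x := m • Additive.ofMul x) (by simpa using hmx)⟩
  · exact .inl ⟨fun k => hinf.natEmbedding I k,
      hI.linearIndependent.comp _ (hinf.natEmbedding I).injective⟩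

theorem exists_subgroup_mulEquiv_zInf {G : Type*} [Group G] (A : Subgroup G) [IsMulCommutative A]
    {b : ℕ → Additive A} (hb : LinearIndependent ℤ b) : ∃ H : Subgroup G, Nonempty (H ≃* ZInf) := by
  let f : ZInf →* A :=
    AddMonoidHom.toMultiplicativeLeft (Finsupp.linearCombination ℤ b).toAddMonoidHom
  have hf : Function.Injective (A.subtype.comp f) := A.subtype_injective.comp hb
  exact ⟨_, ⟨(MonoidHom.ofInjective hf).symm⟩⟩

theorem exists_linearIndependent_of_forall_pow_mem {G : Type*} [Group G] {π : G →* ZInf}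
    (hπ : Function.Surjective π) (C : Subgroup G) [IsMulCommutative C]
    (hC : ∀ g, ∃ n, 0 < n ∧ g ^ n ∈ C) : ∃ b : ℕ → Additive C, LinearIndependent ℤ b := by
  choose g hg using fun i => hπ (Multiplicative.ofAdd (Finsupp.single i 1))
  choose n hn hmem using fun i => hC (g i)
  let b : ℕ → Additive C := fun i => Additive.ofMul ⟨g i ^ n i, hmem i⟩
  let p : Additive C →ₗ[ℤ] ℕ →₀ ℤ := (MonoidHom.toAdditiveLeft (π.comp C.subtype)).toIntLinearMap
  have hpb : p ∘ b = fun i => Finsupp.single i (n i : ℤ) := by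
    ext i : 1
    simp [p, b, hg]
  refine ⟨b, LinearIndependent.of_comp p ?_⟩
  rw [hpb]
  exact Finsupp.linearIndependent_single_of_ne_zero fun i => by simpa using (hn i).ne'

theorem zinf_subgroup_of_torsionFree_general (G : Type) [Group G]
    (htf : ∀ g : G, g ≠ 1 → ¬IsOfFinOrder g) (hlva : LocallyVirtuallyAbelian G)
    (N : Subgroup G) [N.Normal] (hNab : IsMulCommutative N)
    (hq : Nonempty ((G ⧸ N) ≃* ZInf)) :
    ∃ H : Subgroup G, Nonempty (H ≃* ZInf) := by
  obtain ⟨φ⟩ := hq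
  let π : G →* ZInf := φ.toMonoidHom.comp (QuotientGroup.mk' N)
  have hπ : Function.Surjective π := φ.surjective.comp (QuotientGroup.mk'_surjective N)
  have hker : π.ker = N := by
    ext g
    simp [π]
  rcases CommGroup.exists_linearIndependent_or_finite_zpow_mem_closure N with
    ⟨b, hb⟩ | ⟨S, hS, hspan⟩
  · exact exists_subgroup_mulEquiv_zInf N hb
  · have := isMulCommutative_centralizer htf hlva (hker ▸ Abelianization.commutator_subset_ker π)
    obtain ⟨b, hb⟩ :=
      exists_linearIndependent_of_forall_pow_mem hπ _ (exists_pow_mem_centralizer htf hlva hS hspan)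
    exact exists_subgroup_mulEquiv_zInf _ hb

/-- **Lemma.** Let `G` be a countable torsion-free locally virtually abelian group, and let `N`
be an abelian normal subgroup of `G` such that `G/N ≅ ℤ^∞`. Then `G` has a subgroup isomorphic
to `ℤ^∞`. -/
theorem zinf_subgroup_of_torsionFree (G : Type) [Group G] [Countable G]
    (htf : ∀ g : G, g ≠ 1 → ¬IsOfFinOrder g) (hlva : LocallyVirtuallyAbelian G)
    (N : Subgroup G) [N.Normal] (hNab : IsMulCommutative N)
    (hq : Nonempty ((G ⧸ N) ≃* ZInf)) :
    ∃ H : Subgroup G, Nonempty (H ≃* ZInf) :=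
  zinf_subgroup_of_torsionFree_general G htf hlva N hNab hq
end

section
/- Let G be a locally virtually abelian group with a normal torsion subgroup T such that G/T is isomorphic to ℤ^∞. Then G has a subgroup isomorphic to ℤ^∞. -/
/-!
Lift the basis vectors `eᵢ` of `ℤ^∞` to `gᵢ ∈ G` and let `Sₙ = ⟨g₀, …, gₙ⟩`. Since `Sₙ` is
virtually abelian, it has a normal abelian subgroup `N` of finite index; a power `a` of `gₙ` lies
in `N`, and the product of the conjugates of `a` over the cosets of `N` is central in `Sₙ` and maps
to a positive multiple of `eₙ`. These central elements `bₙ` commute pairwise, because `bᵢ ∈ Sₙ`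
for `i ≤ n`, and their images are nonzero multiples of distinct basis vectors, so they freely
generate a copy of `ℤ^∞`.
-/

open scoped IsMulCommutative

theorem VirtuallyAbelian.exists_normal_isMulCommutative_finiteIndex {H : Type*} [Group H]
    (hH : VirtuallyAbelian H) :
    ∃ N : Subgroup H, N.Normal ∧ IsMulCommutative N ∧ N.FiniteIndex := by
  obtain ⟨A, hA, hAfi⟩ := hH
  exact ⟨A.normalCore, A.normalCore_normal,
    .of_setLike_mul_comm fun _ hx _ hy ↦ setLike_mul_comm (A.normalCore_le hx) (A.normalCore_le hy),
    A.finiteIndex_normalCore⟩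

theorem apply_prod_quotient_out_apply_of_le_ker {H M : Type*} [Group H] [CommMonoid M]
    (ρ : H →* MulAut M) (N : Subgroup H) [Fintype (H ⧸ N)] (hN : N ≤ ρ.ker) (a : M) (y : H) :
    ρ y (∏ q : H ⧸ N, ρ q.out a) = ∏ q : H ⧸ N, ρ q.out a := by
  have hρ : ∀ q : H ⧸ N, ρ y (ρ q.out a) = ρ (y • q).out a := fun q ↦ by
    obtain ⟨n, hn⟩ := QuotientGroup.mk_out_eq_mul N (y * q.out)
    have hn1 : ρ n = 1 := hN n.2
    have hq : y • q = ((y * q.out : H) : H ⧸ N) := by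
      conv_lhs => rw [← q.out_eq']
      rfl
    rw [hq, hn, map_mul ρ _ (n : H), hn1, mul_one, map_mul, MulAut.mul_apply]
  rw [map_prod]
  simp_rw [hρ]
  exact Fintype.prod_equiv (MulAction.toPerm y) _ _ fun _ ↦ rfl

theorem Subgroup.prod_conjNormal_out_mem_center {H : Type*} [Group H] (N : Subgroup H) [N.Normal]
    [IsMulCommutative N] [Fintype (H ⧸ N)] (a : N) :
    ((∏ q : H ⧸ N, MulAut.conjNormal q.out a : N) : H) ∈ Subgroup.center H := by
  have hN : N ≤ (MulAut.conjNormal (H := N)).ker := fun n hn ↦ by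
    ext x
    simp only [MulAut.conjNormal_apply, MulAut.one_apply, mul_inv_eq_iff_eq_mul]
    exact setLike_mul_comm hn x.2
  refine Subgroup.mem_center_iff.mpr fun y ↦ ?_
  have hfix := congrArg Subtype.val
    (apply_prod_quotient_out_apply_of_le_ker MulAut.conjNormal N hN a y)
  rw [MulAut.conjNormal_apply] at hfix
  exact mul_inv_eq_iff_eq_mul.mp hfix

theorem VirtuallyAbelian.exists_mem_center_map_eq_pow {H Z : Type*} [Group H] [CommGroup Z]
    (hH : VirtuallyAbelian H) (π : H →* Z) (x : H) :
    ∃ b ∈ Subgroup.center H, ∃ m : ℕ, 0 < m ∧ π b = π x ^ m := by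
  obtain ⟨N, hNn, hNc, hNfi⟩ := hH.exists_normal_isMulCommutative_finiteIndex
  let := Fintype.ofFinite (H ⧸ N)
  let a : N := ⟨x ^ N.index, N.pow_index_mem x⟩
  refine ⟨_, N.prod_conjNormal_out_mem_center a, N.index * Fintype.card (H ⧸ N),
    Nat.mul_pos (Nat.pos_of_ne_zero hNfi.index_ne_zero) Fintype.card_pos, ?_⟩
  have hconj : ∀ g : H, π (MulAut.conjNormal g a) = π x ^ N.index := fun g ↦ by
    simp [a, mul_comm (π g)]
  rw [← N.coe_subtype, ← MonoidHom.comp_apply, map_prod]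
  simp only [MonoidHom.comp_apply, Subgroup.coe_subtype, hconj, Finset.prod_const,
    Finset.card_univ, pow_mul]

theorem exists_subgroup_mulEquiv_finsupp_of_commute {G ι : Type*} [Group G]
    (π : G →* Multiplicative (ι →₀ ℤ)) (b : ι → G) (hb : ∀ i j, Commute (b i) (b j))
    (m : ι → ℤ) (hm : ∀ i, m i ≠ 0) (hπb : ∀ i, π (b i) = .ofAdd (Finsupp.single i (m i))) :
    ∃ H : Subgroup G, Nonempty (H ≃* Multiplicative (ι →₀ ℤ)) := by
  let A := Subgroup.closure (Set.range b)
  have : IsMulCommutative A := Subgroup.isMulCommutative_closure <| by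
    rintro _ ⟨i, rfl⟩ _ ⟨j, rfl⟩
    exact hb i j
  let ψ : Multiplicative (ι →₀ ℤ) →* A := AddMonoidHom.toMultiplicativeLeft <|
    Finsupp.liftAddHom fun i ↦ zmultiplesHom _ (.ofMul ⟨b i, Subgroup.subset_closure ⟨i, rfl⟩⟩)
  have hcoord : ∀ s k, (π (ψ (.ofAdd s))).toAdd k = s k * m k := fun s ↦ by
    induction s using Finsupp.induction_linear with
    | zero => simp
    | add f g hf hg =>
      intro k
      simp [ofAdd_add, hf, hg, add_mul]
    | single i n =>
      have hψ : (ψ (.ofAdd (Finsupp.single i n)) : G) = b i ^ n := by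
        simp [ψ]
      intro k
      rw [hψ, map_zpow, hπb, toAdd_zpow, toAdd_ofAdd, Finsupp.smul_single]
      rcases eq_or_ne i k with rfl | hik
      · simp
      · simp [hik]
  have hinj : Function.Injective (A.subtype.comp ψ) := by
    rw [injective_iff_map_eq_one]
    intro s hs
    apply Multiplicative.toAdd.injective
    ext k
    have hk := hcoord s.toAdd k
    simp only [ofAdd_toAdd] at hk
    rw [show ((ψ s : A) : G) = 1 from hs, map_one] at hk
    simpa [hm k] using hk.symm
  exact ⟨_, ⟨(MonoidHom.ofInjective hinj).symm⟩⟩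

theorem LocallyVirtuallyAbelian.exists_subgroup_mulEquiv_zinf {G : Type*} [Group G]
    (hG : LocallyVirtuallyAbelian G) (π : G →* ZInf) (hπ : Function.Surjective π) :
    ∃ H : Subgroup G, Nonempty (H ≃* ZInf) := by
  choose g hg using fun i ↦ hπ (.ofAdd (Finsupp.single i 1))
  let S : ℕ → Subgroup G := fun n ↦ Subgroup.closure (g '' Set.Iic n)
  have hS_fg : ∀ n, Group.FG (S n) := fun n ↦ (Group.fg_iff_subgroup_fg _).mpr <|
    (Subgroup.fg_iff _).mpr ⟨_, rfl, (Set.finite_Iic n).image g⟩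
  have hS_mono : Monotone S := fun _ _ h ↦
    Subgroup.closure_mono (Set.image_mono (Set.Iic_subset_Iic.mpr h))
  choose b hb_center m hm hπb using fun n ↦ (hG _ (hS_fg n)).exists_mem_center_map_eq_pow
    (π.comp (S n).subtype) ⟨g n, Subgroup.subset_closure ⟨n, Set.mem_Iic.mpr le_rfl, rfl⟩⟩
  have hcomm : ∀ i j, i ≤ j → Commute (b i : G) (b j) := fun i j hij ↦
    congrArg Subtype.val (Subgroup.mem_center_iff.mp (hb_center j) ⟨b i, hS_mono hij (b i).2⟩)
  refine exists_subgroup_mulEquiv_finsupp_of_commute π (fun n ↦ b n)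
    (fun i j ↦ (le_total i j).elim (hcomm i j) fun hji ↦ (hcomm j i hji).symm)
    (fun n ↦ m n) (fun n ↦ by exact_mod_cast (hm n).ne') fun n ↦ ?_
  have h := hπb n
  simp only [MonoidHom.comp_apply, Subgroup.coe_subtype, hg] at h
  rw [h, ← ofAdd_nsmul, Finsupp.smul_single, nsmul_one]

theorem zinf_subgroup_of_torsion_quotient_general (G : Type) [Group G]
    (hlva : LocallyVirtuallyAbelian G)
    (T : Subgroup G) [T.Normal]
    (hq : Nonempty ((G ⧸ T) ≃* ZInf)) :
    ∃ H : Subgroup G, Nonempty (H ≃* ZInf) := by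
  obtain ⟨e⟩ := hq
  exact hlva.exists_subgroup_mulEquiv_zinf (e.toMonoidHom.comp (QuotientGroup.mk' T))
    (e.surjective.comp (QuotientGroup.mk'_surjective T))

/-- **Lemma.** Let `G` be a locally virtually abelian group with a normal torsion subgroup `T`
such that `G/T ≅ ℤ^∞`. Then `G` has a subgroup isomorphic to `ℤ^∞`. -/
theorem zinf_subgroup_of_torsion_quotient (G : Type) [Group G]
    (hlva : LocallyVirtuallyAbelian G)
    (T : Subgroup G) [T.Normal] (htor : ∀ x ∈ T, IsOfFinOrder x)
    (hq : Nonempty ((G ⧸ T) ≃* ZInf)) :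
    ∃ H : Subgroup G, Nonempty (H ≃* ZInf) :=
  zinf_subgroup_of_torsion_quotient_general G hlva T hq
end
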